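/- For a feasible initial state s₁ (i.e., min_π V_c^π(s₁) = 0), the Lagrangian dual value min_{y ≥ 0} max_{π} (V_r^π(s₁) − y·V_c^π(s₁)) equals the constrained optimum max{V_r^π(s₁) : V_c^π(s₁) = 0} (strong duality for the zero-violation CMDP), without assuming Slater's condition. -/

import Mathlib

open Finset

/-- Expected sum of the per-step functions `f` (indexed by the number of remaining
steps) along trajectories generated by policy `π` under dynamics `P`. -/
noncomputable def EV {S A : Type*} [Fintype S] [Fintype A]
    (P : S → A → S → ℝ) (π : ℕ → S → A → ℝ) (f : ℕ → S → A → ℝ) :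
    ℕ → S → ℝ
  | 0, _ => 0
  | n + 1, s =>
      ∑ a, π (n + 1) s a * (f (n + 1) s a + ∑ s', P s a s' * EV P π f n s')

/-- State-action value (cost-to-go) of a policy, with `n` remaining steps. -/
noncomputable def Qval {S A : Type*} [Fintype S] [Fintype A]
    (P : S → A → S → ℝ) (c : ℕ → S → A → ℝ) (π : ℕ → S → A → ℝ) :
    ℕ → S → A → ℝ
  | 0, _, _ => 0
  | n + 1, s, a => c (n + 1) s a + ∑ s', P s a s' * EV P π c n s'

/-- `P` is a stochastic transition kernel. -/
def StochMat {S A : Type*} [Fintype S] (P : S → A → S → ℝ) : Prop :=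
  ∀ s a, (∀ s', 0 ≤ P s a s') ∧ ∑ s', P s a s' = 1

/-- `π` is a (Markovian, possibly time-dependent) stochastic policy. -/
def StochPol {S A : Type*} [Fintype A] (π : ℕ → S → A → ℝ) : Prop :=
  ∀ n s, (∀ a, 0 ≤ π n s a) ∧ ∑ a, π n s a = 1

/-!
Weak duality holds for every `y ≥ 0`, because feasible policies pay no penalty. For the
converse, the Lagrangian reward `r - y c` is maximized over all Markov policies by a
deterministic one (backward induction), and over a horizon `H` deterministic policies produce
only finitely many costs, so a nonzero cost is at least some gap `δ > 0`. At `y = H / δ` a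
maximizer either has zero cost, and is then feasible, or pays a penalty of at least `H` and has
Lagrangian value `≤ 0`, which no feasible policy falls below since `r ≥ 0`. So the dual value is
attained at `y = H / δ` and equals the constrained optimum.
-/

lemma Set.Finite.exists_pos_forall_le_of_pos {T : Set ℝ} (hT : T.Finite) :
    ∃ δ > 0, ∀ x ∈ T, 0 < x → δ ≤ x := by
  have hT' : (insert 1 {x ∈ T | 0 < x}).Finite := (hT.subset (Set.sep_subset _ _)).insert 1
  obtain ⟨δ, hδ, hmin⟩ := Set.exists_min_image _ id hT' (Set.insert_nonempty _ _)
  refine ⟨δ, ?_, fun x hx hx0 => hmin x (Or.inr ⟨hx, hx0⟩)⟩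
  rcases hδ with rfl | ⟨-, hδ⟩
  exacts [one_pos, hδ]

section EV

variable {S A : Type*} [Fintype S] [Fintype A] (P : S → A → S → ℝ)

lemma EV_sub_mul (π f g : ℕ → S → A → ℝ) (y : ℝ) (n : ℕ) (s : S) :
    EV P π (fun n s a => f n s a - y * g n s a) n s = EV P π f n s - y * EV P π g n s := by
  induction n generalizing s with
  | zero => simp [EV]
  | succ n ih =>
    simp only [EV, ih, mul_sub, mul_add, sum_sub_distrib, sum_add_distrib, mul_left_comm _ y,
      ← mul_sum]
    ring

lemma EV_congr_of_forall_le {π π' : ℕ → S → A → ℝ} (f : ℕ → S → A → ℝ) {n : ℕ}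
    (h : ∀ m ≤ n, π m = π' m) (s : S) : EV P π f n s = EV P π' f n s := by
  induction n generalizing s with
  | zero => rfl
  | succ n ih =>
    simp only [EV, h (n + 1) le_rfl, ih fun m hm => h m (Nat.le_succ_of_le hm)]

variable {P} (hP : StochMat P)
include hP

lemma EV_nonneg {π f : ℕ → S → A → ℝ} (hπ : StochPol π) (hf : ∀ n s a, 0 ≤ f n s a)
    (n : ℕ) (s : S) : 0 ≤ EV P π f n s := by
  induction n generalizing s with
  | zero => exact le_rfl
  | succ n ih =>
    exact sum_nonneg fun a _ => mul_nonneg ((hπ _ _).1 a)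
      (add_nonneg (hf _ _ _) (sum_nonneg fun s' _ => mul_nonneg ((hP s a).1 s') (ih s')))

lemma EV_le_of_le_one {π f : ℕ → S → A → ℝ} (hπ : StochPol π) (hf : ∀ n s a, f n s a ≤ 1)
    (n : ℕ) (s : S) : EV P π f n s ≤ n := by
  induction n generalizing s with
  | zero => simp [EV]
  | succ n ih =>
    have hnext (a : A) : ∑ s', P s a s' * EV P π f n s' ≤ n :=
      calc ∑ s', P s a s' * EV P π f n s' ≤ ∑ s', P s a s' * n :=
            sum_le_sum fun s' _ => mul_le_mul_of_nonneg_left (ih s') ((hP s a).1 s')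
        _ = n := by rw [← sum_mul, (hP s a).2, one_mul]
    calc EV P π f (n + 1) s ≤ ∑ a, π (n + 1) s a * (1 + n) :=
          sum_le_sum fun a _ => mul_le_mul_of_nonneg_left
            (add_le_add (hf _ _ _) (hnext a)) ((hπ _ _).1 a)
      _ = ((n + 1 : ℕ) : ℝ) := by rw [← sum_mul, (hπ _ _).2, one_mul]; push_cast; ring

end EV

section Deterministic

variable {S A : Type*} [Fintype A]

open scoped Classical in
noncomputable def detPolicy (d : ℕ → S → A) : ℕ → S → A → ℝ :=
  fun n s a => if a = d n s then 1 else 0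

lemma stochPol_detPolicy (d : ℕ → S → A) : StochPol (detPolicy d) := by
  classical
  exact fun n s => ⟨fun a => by unfold detPolicy; split <;> norm_num, by simp [detPolicy]⟩

lemma nonempty_of_stochPol {π : ℕ → S → A → ℝ} (hπ : StochPol π) (s : S) : Nonempty A := by
  by_contra hA
  simpa [not_nonempty_iff.mp hA] using (hπ 0 s).2

variable [Fintype S] (P : S → A → S → ℝ)

lemma EV_detPolicy_succ (f : ℕ → S → A → ℝ) (d : ℕ → S → A) (n : ℕ) (s : S) :
    EV P (detPolicy d) f (n + 1) s
      = f (n + 1) s (d (n + 1) s) + ∑ s', P s (d (n + 1) s) s' * EV P (detPolicy d) f n s' := by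
  classical
  simp [EV, detPolicy, ite_mul]

variable [Nonempty A]

noncomputable def optEV (g : ℕ → S → A → ℝ) : ℕ → S → ℝ
  | 0, _ => 0
  | n + 1, s => univ.sup' univ_nonempty fun a => g (n + 1) s a + ∑ s', P s a s' * optEV g n s'

noncomputable def greedy (g : ℕ → S → A → ℝ) : ℕ → S → A
  | 0, _ => Classical.arbitrary A
  | n + 1, s => Classical.choose (exists_mem_eq_sup' univ_nonempty
      fun a => g (n + 1) s a + ∑ s', P s a s' * optEV P g n s')

variable {P} in
lemma EV_le_optEV (hP : StochMat P) (g : ℕ → S → A → ℝ) {π : ℕ → S → A → ℝ}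
    (hπ : StochPol π) (n : ℕ) (s : S) : EV P π g n s ≤ optEV P g n s := by
  induction n generalizing s with
  | zero => exact le_rfl
  | succ n ih =>
    have hstep (a : A) : g (n + 1) s a + ∑ s', P s a s' * EV P π g n s' ≤ optEV P g (n + 1) s :=
      (add_le_add le_rfl (sum_le_sum fun s' _ =>
        mul_le_mul_of_nonneg_left (ih s') ((hP s a).1 s'))).trans
        (le_sup' (fun a => g (n + 1) s a + ∑ s', P s a s' * optEV P g n s') (mem_univ a))
    calc EV P π g (n + 1) s ≤ ∑ a, π (n + 1) s a * optEV P g (n + 1) s :=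
          sum_le_sum fun a _ => mul_le_mul_of_nonneg_left (hstep a) ((hπ _ _).1 a)
      _ = optEV P g (n + 1) s := by rw [← sum_mul, (hπ _ _).2, one_mul]

lemma EV_detPolicy_greedy (g : ℕ → S → A → ℝ) (n : ℕ) (s : S) :
    EV P (detPolicy (greedy P g)) g n s = optEV P g n s := by
  induction n generalizing s with
  | zero => rfl
  | succ n ih =>
    rw [EV_detPolicy_succ]
    simp only [ih]
    exact (Classical.choose_spec (exists_mem_eq_sup' univ_nonempty
      fun a => g (n + 1) s a + ∑ s', P s a s' * optEV P g n s')).2.symm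

variable {P} in
lemma exists_detPolicy_forall_EV_le (hP : StochMat P) (g : ℕ → S → A → ℝ) (n : ℕ) (s : S) :
    ∃ d, ∀ π, StochPol π → EV P π g n s ≤ EV P (detPolicy d) g n s :=
  ⟨greedy P g, fun _ hπ => EV_detPolicy_greedy P g n s ▸ EV_le_optEV hP g hπ n s⟩

-- only the decision rules `d 0, …, d n` enter `EV P (detPolicy d) f n s`
lemma finite_range_EV_detPolicy (f : ℕ → S → A → ℝ) (n : ℕ) (s : S) :
    (Set.range fun d : ℕ → S → A => EV P (detPolicy d) f n s).Finite := by
  let extend (e : Fin (n + 1) → S → A) : ℕ → S → A :=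
    fun m => if h : m < n + 1 then e ⟨m, h⟩ else fun _ => Classical.arbitrary A
  refine (Set.finite_range fun e => EV P (detPolicy (extend e)) f n s).subset ?_
  rintro _ ⟨d, rfl⟩
  refine ⟨fun m => d m, EV_congr_of_forall_le P f (fun m hm => ?_) s⟩
  have hext : extend (fun m => d m) m = d m := dif_pos (Nat.lt_succ_of_le hm)
  funext s a
  simp only [detPolicy]
  rw [hext]

end Deterministic

theorem exists_penalty_le_EV_of_feasible {S A : Type*} [Fintype S] [Fintype A]
    {P : S → A → S → ℝ} {r c : ℕ → S → A → ℝ} (hP : StochMat P)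
    (hr : ∀ n s a, r n s a ∈ Set.Icc (0 : ℝ) 1) (hc : ∀ n s a, 0 ≤ c n s a) {n : ℕ} {s : S}
    (hfeas : ∃ π, StochPol π ∧ EV P π c n s = 0) :
    ∃ y ≥ 0, ∀ π, StochPol π → ∃ π', StochPol π' ∧ EV P π' c n s = 0 ∧
      EV P π r n s - y * EV P π c n s ≤ EV P π' r n s := by
  obtain ⟨π₀, hπ₀, hπ₀c⟩ := hfeas
  have := nonempty_of_stochPol hπ₀ s
  obtain ⟨δ, hδ, hgap⟩ := (finite_range_EV_detPolicy P c n s).exists_pos_forall_le_of_pos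
  -- a policy with nonzero cost then pays a penalty of at least `n`, its largest possible reward
  set y : ℝ := n / δ
  obtain ⟨d, hd⟩ := exists_detPolicy_forall_EV_le hP (fun n s a => r n s a - y * c n s a) n s
  refine ⟨y, by positivity, fun π hπ => ?_⟩
  have hπd : EV P π r n s - y * EV P π c n s
      ≤ EV P (detPolicy d) r n s - y * EV P (detPolicy d) c n s := by
    simpa only [EV_sub_mul] using hd π hπ
  rcases (EV_nonneg hP (stochPol_detPolicy d) hc n s).eq_or_lt with hzero | hpos
  · exact ⟨detPolicy d, stochPol_detPolicy d, hzero.symm, by simpa [← hzero] using hπd⟩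
  · have hpenalty : (n : ℝ) ≤ y * EV P (detPolicy d) c n s :=
      calc (n : ℝ) = y * δ := (div_mul_cancel₀ _ hδ.ne').symm
        _ ≤ y * EV P (detPolicy d) c n s :=
          mul_le_mul_of_nonneg_left (hgap _ ⟨d, rfl⟩ hpos) (by positivity)
    have hreward := EV_le_of_le_one hP (stochPol_detPolicy d) (fun n s a => (hr n s a).2) n s
    have hπ₀r := EV_nonneg hP hπ₀ (fun n s a => (hr n s a).1) n s
    exact ⟨π₀, hπ₀, hπ₀c, by linarith⟩

/-- Strong duality for the zero-violation CMDP at a feasible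
initial state `s₁`: `min_{y ≥ 0} max_π (V_r^π(s₁) − y·V_c^π(s₁))` equals
`max {V_r^π(s₁) : V_c^π(s₁) = 0}`, without Slater's condition. -/
theorem strong_duality_zero_violation
    {S A : Type*} [Fintype S] [Fintype A]
    (P : S → A → S → ℝ) (r c : ℕ → S → A → ℝ) (H : ℕ)
    (hP : StochMat P)
    (hr : ∀ n s a, r n s a ∈ Set.Icc (0 : ℝ) 1)
    (hc : ∀ n s a, 0 ≤ c n s a)
    (s₁ : S)
    (hfeas : ∃ π, StochPol π ∧ EV P π c H s₁ = 0) :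
    sInf {v : ℝ | ∃ y : ℝ, 0 ≤ y ∧
        v = sSup {x : ℝ | ∃ π, StochPol π ∧
          x = EV P π r H s₁ - y * EV P π c H s₁}} =
      sSup {x : ℝ | ∃ π, StochPol π ∧ EV P π c H s₁ = 0 ∧
        x = EV P π r H s₁} := by
  obtain ⟨y₀, hy₀, hpenalty⟩ := exists_penalty_le_EV_of_feasible hP hr hc hfeas
  obtain ⟨π₀, hπ₀, hπ₀c⟩ := hfeas
  set feas := {x : ℝ | ∃ π, StochPol π ∧ EV P π c H s₁ = 0 ∧ x = EV P π r H s₁}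
  set lag : ℝ → Set ℝ := fun y =>
    {x : ℝ | ∃ π, StochPol π ∧ x = EV P π r H s₁ - y * EV P π c H s₁}
  have hr1 : ∀ n s a, r n s a ≤ 1 := fun n s a => (hr n s a).2
  have hfeas_bdd : BddAbove feas := ⟨H, by
    rintro _ ⟨π, hπ, -, rfl⟩
    exact EV_le_of_le_one hP hπ hr1 H s₁⟩
  have hlag_bdd (y : ℝ) (hy : 0 ≤ y) : BddAbove (lag y) := ⟨H, by
    rintro _ ⟨π, hπ, rfl⟩
    have := mul_nonneg hy (EV_nonneg hP hπ hc H s₁)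
    linarith [EV_le_of_le_one hP hπ hr1 H s₁]⟩
  have hweak (y : ℝ) (hy : 0 ≤ y) : sSup feas ≤ sSup (lag y) :=
    csSup_le ⟨_, π₀, hπ₀, hπ₀c, rfl⟩ fun _ ⟨π, hπ, hπc, hx⟩ =>
      le_csSup (hlag_bdd y hy) ⟨π, hπ, by rw [hx, hπc, mul_zero, sub_zero]⟩
  have hexact : sSup (lag y₀) ≤ sSup feas :=
    csSup_le ⟨_, π₀, hπ₀, rfl⟩ fun _ ⟨π, hπ, hx⟩ =>
      have ⟨π', hπ', hπ'c, hle⟩ := hpenalty π hπ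
      le_csSup_of_le hfeas_bdd ⟨π', hπ', hπ'c, rfl⟩ (hx ▸ hle)
  exact IsLeast.csInf_eq ⟨⟨y₀, hy₀, (le_antisymm hexact (hweak y₀ hy₀)).symm⟩,
    fun _ ⟨y, hy, hv⟩ => hv ▸ hweak y hy⟩
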